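/- Let a < 0 < b and 0 < c. There exists a one-layer spiking neural network with one variable input neuron u₁ (firing at t_{u₁} = x), one auxiliary input neuron with constant firing time, and one output neuron v, such that the firing time of v equals f(x) = −x + c for x < 0 and f(x) = c for x ≥ 0, for all x ∈ [a,b]. -/
import Mathlib


/-- `FiresAt w dl θ t τ`: SRM output neuron with weights `w`, delays `dl`,
threshold `θ` fires at time `τ` on input firing times `t` (some nonempty causal
subset with positive weight sum, arrival/firing order constraints, SRM formula). -/
def FiresAt {n : ℕ} (w dl : Fin n → ℝ) (θ : ℝ) (t : Fin n → ℝ) (τ : ℝ) : Prop :=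
  ∃ S : Finset (Fin n), S.Nonempty ∧ 0 < ∑ i ∈ S, w i ∧
    (∀ k ∈ S, t k + dl k < τ) ∧ (∀ k ∉ S, τ ≤ t k + dl k) ∧
    τ = (θ + ∑ i ∈ S, w i * (t i + dl i)) / (∑ i ∈ S, w i)

/-- for `a < 0 < b` and `0 < c` there is a one-layer SNN with one
variable input neuron (firing at `x`), one auxiliary input neuron with constant
firing time, and one output neuron whose firing time equals `−x + c` for `x < 0`
and `c` for `x ≥ 0`, for all `x ∈ [a,b]`. -/
theorem stmt10 (a b c : ℝ) (ha : a < 0) (hb : 0 < b) (hc : 0 < c) :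
    ∃ (w dl : Fin 2 → ℝ) (θ t2 : ℝ), 0 < θ ∧ (∀ i, 0 ≤ dl i) ∧
      ∀ x ∈ Set.Icc a b,
        FiresAt w dl θ (fun i => if i = 0 then x else t2)
          (if x < 0 then -x + c else c) := by
  refine ⟨![-(1/2), 1], ![c, c], c, -c, hc, ?_, ?_⟩
  · intro i; fin_cases i <;> simp [hc.le]
  intro x hx
  by_cases hxc : x < 0
  · rw [if_pos hxc]
    refine ⟨{0, 1}, ⟨0, by simp⟩, ?_, ?_, ?_, ?_⟩
    · norm_num
    · intro k hk
      fin_cases k <;> simp_all <;> linarith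
    · intro k hk
      fin_cases k <;> simp_all
    · simp [Fin.sum_univ_succ]
      ring
  · rw [if_neg hxc]
    refine ⟨{1}, ⟨1, by simp⟩, ?_, ?_, ?_, ?_⟩
    · norm_num
    · intro k hk
      fin_cases k <;> simp_all <;> linarith
    · intro k hk
      fin_cases k <;> simp_all <;> linarith
    · simp
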